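/- If A is a good bounded pseudo-hoop, then a filter F of A is fantastic if and only if it is involutive. -/

import Mathlib

universe u v

class PseudoHoop (A : Type u) extends One A, Mul A where
  rimp : A → A → A
  limp : A → A → A
  mul_one' : ∀ x : A, x * 1 = x
  one_mul' : ∀ x : A, 1 * x = x
  rimp_self : ∀ x : A, rimp x x = 1
  limp_self : ∀ x : A, limp x x = 1
  mul_rimp : ∀ x y z : A, rimp (x * y) z = rimp x (rimp y z)
  mul_limp : ∀ x y z : A, limp (x * y) z = limp y (limp x z)
  div₁ : ∀ x y : A, (rimp x y) * x = (rimp y x) * y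
  div₂ : ∀ x y : A, (rimp x y) * x = x * (limp x y)
  div₃ : ∀ x y : A, x * (limp x y) = y * (limp y x)

namespace PseudoHoop

/-- The order on a pseudo-hoop: `x ≤ y` iff `x → y = 1`. -/
def ple {A : Type u} [PseudoHoop A] (x y : A) : Prop := rimp x y = 1

/-- The meet `x ∧ y = (x → y) ⊙ x`. -/
def meet {A : Type u} [PseudoHoop A] (x y : A) : A := (rimp x y) * x

/-- `x ∨₁ y = (x → y) ⇝ y`. -/
def join₁ {A : Type u} [PseudoHoop A] (x y : A) : A := limp (rimp x y) y

/-- `x ∨₂ y = (x ⇝ y) → y`. -/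
def join₂ {A : Type u} [PseudoHoop A] (x y : A) : A := rimp (limp x y) y

/-- Iterated implication: `x →⁰ y = y`, `x →ⁿ⁺¹ y = x → (x →ⁿ y)`. -/
def rimpPow {A : Type u} [PseudoHoop A] (x : A) : ℕ → A → A
  | 0, y => y
  | n + 1, y => rimp x (rimpPow x n y)

/-- A filter of a pseudo-hoop. -/
structure IsFilter {A : Type u} [PseudoHoop A] (F : Set A) : Prop where
  nonempty : F.Nonempty
  mul_mem : ∀ {x y : A}, x ∈ F → y ∈ F → x * y ∈ F
  upward : ∀ {x y : A}, x ∈ F → ple x y → y ∈ F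

/-- A normal filter: `x → y ∈ F` iff `x ⇝ y ∈ F`. -/
def IsNormalFilter {A : Type u} [PseudoHoop A] (F : Set A) : Prop :=
  IsFilter F ∧ ∀ x y : A, rimp x y ∈ F ↔ limp x y ∈ F

def IsProper {A : Type u} [PseudoHoop A] (F : Set A) : Prop := F ≠ Set.univ

/-- A pseudo-hoop is simple if `{1}` is its unique proper filter. -/
def IsSimple (A : Type u) [PseudoHoop A] : Prop :=
  ∀ F : Set A, IsFilter F → IsProper F → F = {1}

/-- A pseudo-hoop is Wajsberg if `x ∨₁ y = y ∨₁ x` and `x ∨₂ y = y ∨₂ x`. -/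
def IsWajsberg (A : Type u) [PseudoHoop A] : Prop :=
  ∀ x y : A, join₁ x y = join₁ y x ∧ join₂ x y = join₂ y x

/-- A fantastic filter. -/
def IsFantasticFilter {A : Type u} [PseudoHoop A] (F : Set A) : Prop :=
  IsFilter F ∧ ∀ x y : A,
    (rimp y x ∈ F → rimp (join₁ x y) x ∈ F) ∧
    (limp y x ∈ F → limp (join₂ x y) x ∈ F)

def IS₂ {A : Type u} [PseudoHoop A] (μ : A → A) : Prop :=
  ∀ x y : A, μ (x * y) = μ x * μ (limp x (x * y)) ∧
    μ (x * y) = μ (rimp y (x * y)) * μ y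

def IS₃ {A : Type u} [PseudoHoop A] (μ : A → A) : Prop :=
  ∀ x y : A, μ (μ x * μ y) = μ x * μ y

def IS₄ {A : Type u} [PseudoHoop A] (μ : A → A) : Prop :=
  ∀ x y : A, μ (rimp (μ x) (μ y)) = rimp (μ x) (μ y) ∧
    μ (limp (μ x) (μ y)) = limp (μ x) (μ y)

/-- Type I state operator. -/
def IsStateI {A : Type u} [PseudoHoop A] (μ : A → A) : Prop :=
  (∀ x y : A, μ (rimp x y) = rimp (μ (join₁ x y)) (μ y) ∧
      μ (limp x y) = limp (μ (join₂ x y)) (μ y)) ∧ IS₂ μ ∧ IS₃ μ ∧ IS₄ μ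

/-- Type II state operator. -/
def IsStateII {A : Type u} [PseudoHoop A] (μ : A → A) : Prop :=
  (∀ x y : A, μ (rimp x y) = rimp (μ (join₁ y x)) (μ y) ∧
      μ (limp x y) = limp (μ (join₂ y x)) (μ y)) ∧ IS₂ μ ∧ IS₃ μ ∧ IS₄ μ

/-- Type III state operator. -/
def IsStateIII {A : Type u} [PseudoHoop A] (μ : A → A) : Prop :=
  (∀ x y : A, μ (rimp x y) = rimp (μ x) (μ (meet x y)) ∧
      μ (limp x y) = limp (μ x) (μ (meet x y))) ∧ IS₂ μ ∧ IS₃ μ ∧ IS₄ μ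

end PseudoHoop

open PseudoHoop

/-- A bounded pseudo-hoop: a pseudo-hoop with a least element `0`. -/
class BoundedPseudoHoop (A : Type u) extends PseudoHoop A, Zero A where
  zero_le : ∀ x : A, rimp 0 x = 1

namespace BoundedPseudoHoop

/-- `x⁻ = x → 0`. -/
def negr {A : Type u} [BoundedPseudoHoop A] (x : A) : A := rimp x 0

/-- `x∼ = x ⇝ 0`. -/
def negl {A : Type u} [BoundedPseudoHoop A] (x : A) : A := limp x 0

/-- A bounded pseudo-hoop is good if `x⁻∼ = x∼⁻` for all `x`. -/
def IsGood (A : Type u) [BoundedPseudoHoop A] : Prop :=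
  ∀ x : A, negl (negr x) = negr (negl x)

/-- A bounded pseudo-hoop is involutive if `x⁻∼ = x∼⁻ = x` for all `x`. -/
def IsInvolutive (A : Type u) [BoundedPseudoHoop A] : Prop :=
  ∀ x : A, negl (negr x) = x ∧ negr (negl x) = x

/-- The set of dense elements. -/
def Den (A : Type u) [BoundedPseudoHoop A] : Set A :=
  {x : A | negl (negr x) = 1}

/-- An involutive filter: `x⁻∼ → x ∈ F` and `x∼⁻ ⇝ x ∈ F` for all `x`. -/
def IsInvolutiveFilter {A : Type u} [BoundedPseudoHoop A] (F : Set A) : Prop :=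
  IsFilter F ∧ ∀ x : A, rimp (negl (negr x)) x ∈ F ∧ limp (negr (negl x)) x ∈ F

end BoundedPseudoHoop

open BoundedPseudoHoop

/-!
Fantastic implies involutive by taking `y = 0`, since `x ∨₁ 0 = x⁻∼`.

Conversely write `σ x = x⁻∼`, which goodness makes equal to `x∼⁻`. From `y → x ∈ F` the filter
contains `σy → σx`, and for regular elements the fantastic inequality holds outright:
`σy → σx ≤ ((x → σy) ⇝ σy) → σx`: by exchange `σy → σx = x⁻ ⇝ y⁻` and `x → σy = y⁻ ⇝ x⁻`,
and `x⁻ ⊙ (x⁻ ⇝ y⁻) = y⁻ ⊙ (y⁻ ⇝ x⁻)`. Glivenko's identity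
`σ(x → y) = x → σy`, fed into involutivity of `F` at `x → y`, then replaces `σy` by `y`, and
involutivity at `x` replaces `σx` by `x`. The `⇝`-half is the same argument read in the mirror
pseudo-hoop `Rev A`, with multiplication reversed and the two implications exchanged.
-/

namespace PseudoHoop

variable {A : Type u} [PseudoHoop A]

theorem one_rimp_rimp (a b : A) : rimp 1 (rimp a b) = rimp a b := by
  rw [← mul_rimp, one_mul']

theorem rimp_rimp_one (a b : A) : rimp (rimp a b) 1 = 1 := by
  have h : rimp (rimp a b) 1 * rimp a b = rimp a b := by
    rw [div₁, mul_one', one_rimp_rimp]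
  rw [← h, mul_rimp, rimp_self]

theorem ple_antisymm {a b : A} (hab : ple a b) (hba : ple b a) : a = b := by
  have h := div₁ a b
  rwa [hab, hba, one_mul', one_mul'] at h

theorem one_rimp (x : A) : rimp 1 x = x := by
  apply ple_antisymm
  · show rimp (rimp 1 x) x = 1
    rw [← mul_one' (rimp 1 x), div₁, mul_rimp, rimp_self, rimp_rimp_one]
  · show rimp x (rimp 1 x) = 1
    rw [← mul_rimp, mul_one', rimp_self]

theorem rimp_one (x : A) : rimp x 1 = 1 := by
  rw [← one_rimp x]
  exact rimp_rimp_one 1 x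

theorem ple_iff_limp_eq_one {x y : A} : ple x y ↔ limp x y = 1 := by
  constructor
  · intro h
    have hx : x * limp x y = x := by rw [← div₂, h, one_mul']
    rw [← hx, mul_limp, limp_self]
  · intro h
    have hx : rimp x y * x = x := by rw [div₂, h, mul_one']
    show rimp x y = 1
    rw [← hx, mul_rimp, rimp_self]

theorem ple_refl (x : A) : ple x x := rimp_self x

theorem ple_one (x : A) : ple x 1 := rimp_one x

theorem ple_trans {a b c : A} (hab : ple a b) (hbc : ple b c) : ple a c := by
  have hb : rimp b a * b = a := by
    rw [← div₁, hab, one_mul']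
  show rimp a c = 1
  rw [← hb, mul_rimp, hbc, rimp_one]

theorem mul_ple_iff_ple_rimp {a b c : A} : ple (a * b) c ↔ ple a (rimp b c) := by
  rw [ple, ple, mul_rimp]

theorem mul_ple_iff_ple_limp {a b c : A} : ple (a * b) c ↔ ple b (limp a c) := by
  rw [ple_iff_limp_eq_one, ple_iff_limp_eq_one, mul_limp]

theorem rimp_mul_ple (x y : A) : ple (rimp x y * x) y :=
  mul_ple_iff_ple_rimp.mpr (ple_refl _)

theorem mul_limp_ple (x y : A) : ple (x * limp x y) y :=
  mul_ple_iff_ple_limp.mpr (ple_refl _)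

protected theorem mul_assoc (a b c : A) : a * b * c = a * (b * c) := by
  apply ple_antisymm
  · show rimp (a * b * c) (a * (b * c)) = 1
    rw [mul_rimp, mul_rimp, ← mul_rimp b, ← mul_rimp a, rimp_self]
  · show rimp (a * (b * c)) (a * b * c) = 1
    rw [mul_rimp, mul_rimp, ← mul_rimp a, ← mul_rimp (a * b), rimp_self]

theorem mul_ple_mul_left {a b : A} (c : A) (h : ple a b) : ple (c * a) (c * b) :=
  mul_ple_iff_ple_limp.mpr (ple_trans h (mul_ple_iff_ple_limp.mp (ple_refl _)))

theorem mul_ple_mul_right {a b : A} (c : A) (h : ple a b) : ple (a * c) (b * c) :=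
  mul_ple_iff_ple_rimp.mpr (ple_trans h (mul_ple_iff_ple_rimp.mp (ple_refl _)))

theorem rimp_ple_rimp_left {a b : A} (c : A) (h : ple a b) : ple (rimp c a) (rimp c b) :=
  mul_ple_iff_ple_rimp.mp (ple_trans (rimp_mul_ple c a) h)

theorem rimp_ple_rimp_right {a b : A} (c : A) (h : ple a b) : ple (rimp b c) (rimp a c) :=
  mul_ple_iff_ple_rimp.mp (ple_trans (mul_ple_mul_left _ h) (rimp_mul_ple b c))

theorem limp_ple_limp_left {a b : A} (c : A) (h : ple a b) : ple (limp c a) (limp c b) :=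
  mul_ple_iff_ple_limp.mp (ple_trans (mul_limp_ple c a) h)

theorem limp_ple_limp_right {a b : A} (c : A) (h : ple a b) : ple (limp b c) (limp a c) :=
  mul_ple_iff_ple_limp.mp (ple_trans (mul_ple_mul_right _ h) (mul_limp_ple b c))

theorem rimp_limp_comm (a b c : A) : rimp a (limp b c) = limp b (rimp a c) := by
  apply ple_antisymm
  · refine mul_ple_iff_ple_limp.mp (mul_ple_iff_ple_rimp.mp ?_)
    rw [PseudoHoop.mul_assoc]
    exact ple_trans (mul_ple_mul_left b (rimp_mul_ple a _)) (mul_limp_ple b c)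
  · refine mul_ple_iff_ple_rimp.mp (mul_ple_iff_ple_limp.mp ?_)
    rw [← PseudoHoop.mul_assoc]
    exact ple_trans (mul_ple_mul_right a (mul_limp_ple b _)) (rimp_mul_ple a c)

theorem rimp_mul_rimp_ple (a b c : A) : ple (rimp b c * rimp a b) (rimp a c) := by
  refine mul_ple_iff_ple_rimp.mp ?_
  rw [PseudoHoop.mul_assoc]
  exact ple_trans (mul_ple_mul_left _ (rimp_mul_ple a b)) (rimp_mul_ple b c)

theorem limp_mul_limp_ple (a b c : A) : ple (limp a b * limp b c) (limp a c) := by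
  refine mul_ple_iff_ple_limp.mp ?_
  rw [← PseudoHoop.mul_assoc]
  exact ple_trans (mul_ple_mul_right _ (mul_limp_ple a b)) (mul_limp_ple b c)

theorem rimp_ple_limp_rimp_rimp (a b c : A) : ple (rimp a b) (limp (rimp b c) (rimp a c)) :=
  mul_ple_iff_ple_limp.mp (rimp_mul_rimp_ple a b c)

theorem limp_ple_rimp_limp_limp (a b c : A) : ple (limp a b) (rimp (limp b c) (limp a c)) :=
  mul_ple_iff_ple_rimp.mp (limp_mul_limp_ple a b c)

theorem IsFilter.one_mem {F : Set A} (hF : IsFilter F) : (1 : A) ∈ F :=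
  let ⟨_, ha⟩ := hF.nonempty
  hF.upward ha (ple_one _)

theorem IsFilter.rimp_trans {F : Set A} (hF : IsFilter F) {a b c : A}
    (hab : rimp a b ∈ F) (hbc : rimp b c ∈ F) : rimp a c ∈ F :=
  hF.upward (hF.mul_mem hbc hab) (rimp_mul_rimp_ple a b c)

end PseudoHoop

namespace BoundedPseudoHoop

variable {A : Type u} [BoundedPseudoHoop A]

theorem zero_limp (x : A) : limp 0 x = 1 := ple_iff_limp_eq_one.mp (zero_le x)

theorem ple_negl_negr (a : A) : ple a (negl (negr a)) :=
  mul_ple_iff_ple_limp.mp (rimp_mul_ple a 0)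

theorem ple_negr_negl (a : A) : ple a (negr (negl a)) :=
  mul_ple_iff_ple_rimp.mp (mul_limp_ple a 0)

theorem negr_negl_negr (a : A) : negr (negl (negr a)) = negr a :=
  ple_antisymm (rimp_ple_rimp_right 0 (ple_negl_negr a)) (ple_negr_negl (negr a))

theorem negr_negl_ple_negr_negl {a b : A} (h : ple a b) :
    ple (negr (negl a)) (negr (negl b)) :=
  rimp_ple_rimp_right 0 (limp_ple_limp_right 0 h)

theorem rimp_ple_rimp_negl_negr (a b : A) :
    ple (rimp a b) (rimp (negl (negr a)) (negl (negr b))) :=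
  ple_trans (rimp_ple_limp_rimp_rimp a b 0) (limp_ple_rimp_limp_limp (negr b) (negr a) 0)

theorem rimp_negl_negr_ple_rimp_join₁ (x y : A) :
    ple (rimp (negl (negr y)) (negl (negr x)))
      (rimp (join₁ x (negl (negr y))) (negl (negr x))) := by
  have hT : rimp (negl (negr y)) (negl (negr x)) = limp (negr x) (negr y) := by
    show rimp (negl (negr y)) (limp (negr x) 0) = _
    rw [rimp_limp_comm]
    exact congrArg (limp (negr x)) (negr_negl_negr y)
  have hS : rimp x (negl (negr y)) = limp (negr y) (negr x) := rimp_limp_comm x (negr y) 0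
  refine mul_ple_iff_ple_rimp.mp (mul_ple_iff_ple_limp.mp ?_)
  rw [← PseudoHoop.mul_assoc, hT, div₃, ← hS, PseudoHoop.mul_assoc]
  exact ple_trans (mul_ple_mul_left _ (mul_limp_ple _ _)) (mul_limp_ple (negr y) 0)

theorem negl_rimp_negl_negr_ple_zero (hg : IsGood A) (y : A) :
    ple (negl (rimp (negl (negr y)) y)) 0 := by
  have hy : ple (negr y) (rimp (negl (negr y)) y) := by
    have h := rimp_ple_rimp_left (negl (negr y)) (zero_le y)
    rwa [show rimp (negl (negr y)) 0 = negr y from negr_negl_negr y] at h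
  have hy' : ple (negl (rimp (negl (negr y)) y)) (negl (negr y)) := limp_ple_limp_right 0 hy
  have hmeet : rimp (negl (negr y)) y * negl (negr y) = y := by
    rw [div₁, ple_negl_negr y, one_mul']
  have hlimp : limp (negl (negr y)) (negl (rimp (negl (negr y)) y)) = negl y := by
    show limp _ (limp _ 0) = limp y 0
    rw [← mul_limp, hmeet]
  have hv : negl (rimp (negl (negr y)) y) = negl (negr y) * negl y := by
    calc negl (rimp (negl (negr y)) y)
        = rimp (negl (negr y)) (negl (rimp (negl (negr y)) y)) * negl (negr y) := by
          rw [← div₁, hy', one_mul']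
      _ = negl (negr y) * limp (negl (negr y)) (negl (rimp (negl (negr y)) y)) := div₂ _ _
      _ = negl (negr y) * negl y := by
          rw [hlimp]
  rw [hv, hg y]
  exact rimp_mul_ple (negl y) 0

theorem negr_negl_rimp (hg : IsGood A) (x y : A) :
    negr (negl (rimp x y)) = rimp x (negl (negr y)) := by
  apply ple_antisymm
  · have hreg : negr (negl (rimp x (negl (negr y)))) = rimp x (negl (negr y)) := by
      rw [hg y]
      show negr (negl (rimp x (rimp (negl y) 0))) = rimp x (rimp (negl y) 0)
      rw [← mul_rimp]
      exact negr_negl_negr (x * negl y)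
    have h := negr_negl_ple_negr_negl (rimp_ple_rimp_left x (ple_negl_negr y))
    rwa [hreg] at h
  · refine mul_ple_iff_ple_rimp.mp (ple_trans ?_ (negl_rimp_negl_negr_ple_zero hg y))
    refine mul_ple_iff_ple_limp.mp ?_
    rw [← PseudoHoop.mul_assoc]
    exact ple_trans (mul_ple_mul_right _ (rimp_mul_rimp_ple x _ y)) (mul_limp_ple _ 0)

theorem IsInvolutiveFilter.rimp_join₁_mem (hg : IsGood A) {F : Set A}
    (hF : IsInvolutiveFilter F) {x y : A} (h : rimp y x ∈ F) : rimp (join₁ x y) x ∈ F := by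
  obtain ⟨hF, hinv⟩ := hF
  have hσ : rimp (join₁ x (negl (negr y))) (negl (negr x)) ∈ F :=
    hF.upward h (ple_trans (rimp_ple_rimp_negl_negr y x) (rimp_negl_negr_ple_rimp_join₁ x y))
  have hS : limp (rimp x (negl (negr y))) (rimp x y) ∈ F := by
    rw [← negr_negl_rimp hg]
    exact (hinv _).2
  have hjoin : rimp (join₁ x y) (join₁ x (negl (negr y))) ∈ F :=
    hF.upward hS (ple_trans (limp_ple_rimp_limp_limp _ _ _)
      (rimp_ple_rimp_right _ (limp_ple_limp_left _ (ple_negl_negr y))))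
  exact hF.rimp_trans (hF.rimp_trans hjoin hσ) (hinv x).1

end BoundedPseudoHoop

namespace PseudoHoop

def Rev (A : Type u) : Type u := A

namespace Rev

variable {A : Type u}

instance [PseudoHoop A] : PseudoHoop (Rev A) where
  one := (1 : A)
  mul (x y : A) := y * x
  rimp := limp (A := A)
  limp := rimp (A := A)
  mul_one' := one_mul' (A := A)
  one_mul' := mul_one' (A := A)
  rimp_self := limp_self (A := A)
  limp_self := rimp_self (A := A)
  mul_rimp x y z := mul_limp (A := A) y x z
  mul_limp x y z := mul_rimp (A := A) y x z
  div₁ := div₃ (A := A)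
  div₂ x y := (div₂ (A := A) x y).symm
  div₃ := div₁ (A := A)

instance [BoundedPseudoHoop A] : BoundedPseudoHoop (Rev A) where
  zero := (0 : A)
  zero_le := BoundedPseudoHoop.zero_limp (A := A)

variable [BoundedPseudoHoop A]

theorem isFilter {F : Set A} (hF : IsFilter F) : IsFilter (A := Rev A) F :=
  ⟨hF.nonempty, fun hx hy => hF.mul_mem hy hx,
    fun hx hxy => hF.upward hx (ple_iff_limp_eq_one.mpr hxy)⟩

theorem isGood (hg : IsGood A) : IsGood (Rev A) := fun x => (hg x).symm

theorem isInvolutiveFilter {F : Set A} (hF : IsInvolutiveFilter F) :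
    IsInvolutiveFilter (A := Rev A) F :=
  ⟨isFilter hF.1, fun x => ⟨(hF.2 x).2, (hF.2 x).1⟩⟩

end Rev

end PseudoHoop

namespace BoundedPseudoHoop

variable {A : Type u} [BoundedPseudoHoop A]

theorem IsInvolutiveFilter.limp_join₂_mem (hg : IsGood A) {F : Set A}
    (hF : IsInvolutiveFilter F) {x y : A} (h : limp y x ∈ F) : limp (join₂ x y) x ∈ F :=
  (Rev.isInvolutiveFilter hF).rimp_join₁_mem (Rev.isGood hg) (x := x) (y := y) h

theorem IsInvolutiveFilter.isFantasticFilter (hg : IsGood A) {F : Set A}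
    (hF : IsInvolutiveFilter F) : IsFantasticFilter F :=
  ⟨hF.1, fun _ _ => ⟨hF.rimp_join₁_mem hg, hF.limp_join₂_mem hg⟩⟩

end BoundedPseudoHoop

theorem PseudoHoop.IsFantasticFilter.isInvolutiveFilter {A : Type u} [BoundedPseudoHoop A]
    {F : Set A} (hF : IsFantasticFilter F) : IsInvolutiveFilter F := by
  refine ⟨hF.1, fun x => ⟨(hF.2 x 0).1 ?_, (hF.2 x 0).2 ?_⟩⟩
  · rw [BoundedPseudoHoop.zero_le]
    exact hF.1.one_mem
  · rw [zero_limp]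
    exact hF.1.one_mem

theorem stmt15_general {A : Type u} [BoundedPseudoHoop A] (hg : IsGood A)
    (F : Set A) :
    IsFantasticFilter F ↔ IsInvolutiveFilter F :=
  ⟨IsFantasticFilter.isInvolutiveFilter, IsInvolutiveFilter.isFantasticFilter hg⟩

theorem stmt15 {A : Type u} [BoundedPseudoHoop A] (hg : IsGood A)
    (F : Set A) (hF : IsFilter F) :
    IsFantasticFilter F ↔ IsInvolutiveFilter F :=
  stmt15_general hg F
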